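/- Let n₁, n₂ ≥ 1. There is a constant C, depending only on n₁ and n₂, such that for all half-open cubes I¹ ⊂ ℝ^{n₁} and I² ⊂ ℝ^{n₂}, all signatures η¹ ∈ {0,1}^{n₁}, η² ∈ {0,1}^{n₂}, and all v = (v₁,v₂) ∈ ℝ^{n₁}×ℝ^{n₂}: ‖τ_v(h_{I¹}^{η¹} ⊗ h_{I²}^{η²}) − h_{I¹}^{η¹} ⊗ h_{I²}^{η²}‖_{L²(ℝ^{n₁+n₂})} ≤ C ( |v₁|^{1/2} ℓ(I¹)^{−1/2} + |v₂|^{1/2} ℓ(I²)^{−1/2} ), where |v_i| is the ℓ^∞ norm of v_i. -/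

import Mathlib

open MeasureTheory Set
open scoped ENNReal NNReal

noncomputable section

abbrev Rn (n : ℕ) := Fin n → ℝ
abbrev Rnn (n₁ n₂ : ℕ) := Rn n₁ × Rn n₂

/-- A (half-open, axis-parallel) cube in `ℝⁿ`, given by its lower-left corner and its
(positive) sidelength. -/
structure Cube (n : ℕ) where
  corner : Fin n → ℝ
  len : ℝ
  len_pos : 0 < len

/-- The one-dimensional Haar functions on `[a, a + l)`:
`h⁰ = l^{-1/2} 1_{[a, a+l)}` and `h¹ = l^{-1/2}(1_{[a, a+l/2)} - 1_{[a+l/2, a+l)})`. -/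
def haar1 (a l : ℝ) (e : Bool) (t : ℝ) : ℝ :=
  if e then
    (Real.sqrt l)⁻¹ *
      ((if a ≤ t ∧ t < a + l / 2 then (1 : ℝ) else 0) -
        (if a + l / 2 ≤ t ∧ t < a + l then (1 : ℝ) else 0))
  else (Real.sqrt l)⁻¹ * (if a ≤ t ∧ t < a + l then (1 : ℝ) else 0)

/-- The Haar function `h_I^η = h_{I₁}^{η₁} ⊗ ⋯ ⊗ h_{I_n}^{η_n}` of a cube `I ⊂ ℝⁿ` and a
signature `η ∈ {0,1}^n`. -/
def haarCube {n : ℕ} (I : Cube n) (η : Fin n → Bool) (x : Rn n) : ℝ :=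
  ∏ i, haar1 (I.corner i) I.len (η i) (x i)

/-!
Split off one coordinate (or one block of coordinates) at a time:
`g₁ ⊗ g₂ - f₁ ⊗ f₂ = (g₁ - f₁) ⊗ g₂ + f₁ ⊗ (g₂ - f₂)`, and the `L²` norm of a tensor product
is the product of the norms. Haar functions and their translates have norm at most `1`, so
`‖τ_v h - h‖₂` is at most the sum of the one-dimensional errors. In one dimension, `h` and
`τ_s h` agree off the three intervals of length `|s|` at the jumps `a`, `a + ℓ/2`, `a + ℓ`,
and differ by at most `2ℓ^{-1/2}` there, so `‖τ_s h - h‖₂ ≤ 2 √(3|s|/ℓ)`.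
-/

section Tensor

variable {α β : Type*} [MeasurableSpace α] [MeasurableSpace β] {μ : Measure α} {ν : Measure β}
  [SFinite ν] {p : ℝ≥0∞}

theorem eLpNorm_le_of_norm_le_of_support_subset {f : α → ℝ} {s : Set α} {M : ℝ}
    (hf : ∀ x, ‖f x‖ ≤ M) (hs : Function.support f ⊆ s) :
    eLpNorm f p μ ≤ μ s ^ p.toReal⁻¹ * ENNReal.ofReal M := by
  rw [← eLpNorm_restrict_eq_of_support_subset hs]
  simpa using eLpNorm_le_of_ae_bound (μ := μ.restrict s) (p := p) (Filter.Eventually.of_forall hf)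

theorem eLpNorm_prod_mul {f : α → ℝ} {g : β → ℝ} (hf : AEStronglyMeasurable f μ)
    (hg : AEStronglyMeasurable g ν) (hp : p ≠ ∞) :
    eLpNorm (fun z : α × β => f z.1 * g z.2) p (μ.prod ν) = eLpNorm f p μ * eLpNorm g p ν := by
  rcases eq_or_ne p 0 with rfl | hp0
  · simp
  have hr : 0 ≤ p.toReal := ENNReal.toReal_nonneg
  simp only [eLpNorm_eq_lintegral_rpow_enorm_toReal hp0 hp, enorm_mul,
    ENNReal.mul_rpow_of_nonneg _ _ hr]
  rw [lintegral_prod_mul (hf.enorm.pow_const _) (hg.enorm.pow_const _),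
    ENNReal.mul_rpow_of_nonneg _ _ (by positivity)]

theorem eLpNorm_prod_mul_sub_le {f₁ g₁ : α → ℝ} {f₂ g₂ : β → ℝ}
    (hf₁ : AEStronglyMeasurable f₁ μ) (hg₁ : AEStronglyMeasurable g₁ μ)
    (hf₂ : AEStronglyMeasurable f₂ ν) (hg₂ : AEStronglyMeasurable g₂ ν) (hp₁ : 1 ≤ p)
    (hp : p ≠ ∞) :
    eLpNorm (fun z : α × β => g₁ z.1 * g₂ z.2 - f₁ z.1 * f₂ z.2) p (μ.prod ν) ≤
      eLpNorm (g₁ - f₁) p μ * eLpNorm g₂ p ν + eLpNorm f₁ p μ * eLpNorm (g₂ - f₂) p ν := by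
  have hsplit : (fun z : α × β => g₁ z.1 * g₂ z.2 - f₁ z.1 * f₂ z.2) =
      (fun z => (g₁ - f₁) z.1 * g₂ z.2) + fun z => f₁ z.1 * (g₂ - f₂) z.2 := by
    ext z
    simp only [Pi.add_apply, Pi.sub_apply]
    ring
  rw [hsplit, ← eLpNorm_prod_mul (hg₁.sub hf₁) hg₂ hp, ← eLpNorm_prod_mul hf₁ (hg₂.sub hf₂) hp]
  exact eLpNorm_add_le (((hg₁.sub hf₁).comp_fst).mul hg₂.comp_snd)
    (hf₁.comp_fst.mul (hg₂.sub hf₂).comp_snd) hp₁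

end Tensor

theorem eLpNorm_comp_sub_right {G : Type*} [MeasurableSpace G] [AddGroup G] [MeasurableAdd G]
    {μ : Measure G} [μ.IsAddRightInvariant] {f : G → ℝ} (hf : AEStronglyMeasurable f μ)
    (w : G) (p : ℝ≥0∞) : eLpNorm (fun x => f (x - w)) p μ = eLpNorm f p μ :=
  eLpNorm_comp_measurePreserving hf (measurePreserving_sub_right μ w)

section FinProd

variable {α : Type*} [MeasurableSpace α] {p : ℝ≥0∞}

theorem measurable_fin_prod_apply {n : ℕ} {f : Fin n → α → ℝ} (hf : ∀ i, Measurable (f i)) :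
    Measurable fun x : Fin n → α => ∏ i, f i (x i) :=
  Finset.measurable_prod _ fun i _ => (hf i).comp (measurable_pi_apply i)

theorem eLpNorm_pi_fin_succ {n : ℕ} (μ : Fin (n + 1) → Measure α) [∀ i, SigmaFinite (μ i)]
    (Φ : (Fin (n + 1) → α) → ℝ) :
    eLpNorm Φ p (Measure.pi μ) =
      eLpNorm (fun z : α × (Fin n → α) => Φ (Fin.cons z.1 z.2)) p
        ((μ 0).prod (Measure.pi fun i => μ i.succ)) := by
  have e := (measurePreserving_piFinSuccAbove μ 0).symm
  simp only [Fin.succAbove_zero] at e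
  rw [← e.map_eq, MeasurableEquiv.measurableEmbedding _ |>.eLpNorm_map_measure]
  congr 1
  ext z
  simp only [MeasurableEquiv.piFinSuccAbove_symm_apply, Fin.insertNthEquiv_zero,
    Function.comp_apply]
  rfl

theorem eLpNorm_fin_prod_eq_prod {n : ℕ} (μ : Fin n → Measure α) [∀ i, SigmaFinite (μ i)]
    {f : Fin n → α → ℝ} (hf : ∀ i, Measurable (f i)) (hp0 : p ≠ 0) (hp : p ≠ ∞) :
    eLpNorm (fun x => ∏ i, f i (x i)) p (Measure.pi μ) = ∏ i, eLpNorm (f i) p (μ i) := by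
  induction n with
  | zero =>
    have hμ : Measure.pi μ ≠ 0 := fun h => by simpa [h] using Measure.pi_empty_univ μ
    simp only [Finset.univ_eq_empty, Finset.prod_empty]
    rw [eLpNorm_const _ hp0 hμ, Measure.pi_empty_univ]
    simp
  | succ n ih =>
    rw [eLpNorm_pi_fin_succ]
    simp only [Fin.prod_univ_succ, Fin.cons_zero, Fin.cons_succ]
    rw [eLpNorm_prod_mul (g := fun y : Fin n → α => ∏ i, f i.succ (y i))
      (hf 0).aestronglyMeasurable
      (measurable_fin_prod_apply fun i => hf i.succ).aestronglyMeasurable hp,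
      ih _ fun i => hf i.succ]

theorem eLpNorm_fin_prod_sub_le {n : ℕ} (μ : Fin n → Measure α) [∀ i, SigmaFinite (μ i)]
    {f g : Fin n → α → ℝ} (hf : ∀ i, Measurable (f i)) (hg : ∀ i, Measurable (g i))
    (hf₁ : ∀ i, eLpNorm (f i) p (μ i) ≤ 1) (hg₁ : ∀ i, eLpNorm (g i) p (μ i) ≤ 1)
    (hp₁ : 1 ≤ p) (hp : p ≠ ∞) :
    eLpNorm (fun x => ∏ i, g i (x i) - ∏ i, f i (x i)) p (Measure.pi μ) ≤
      ∑ i, eLpNorm (g i - f i) p (μ i) := by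
  induction n with
  | zero => simp
  | succ n ih =>
    have hg_tail : eLpNorm (fun y : Fin n → α => ∏ i, g i.succ (y i)) p
        (Measure.pi fun i => μ i.succ) ≤ 1 := by
      rw [eLpNorm_fin_prod_eq_prod _ (fun i => hg i.succ) (by positivity) hp]
      exact Finset.prod_le_one' fun i _ => hg₁ i.succ
    have h_tail := ih (fun i => μ i.succ) (fun i => hf i.succ) (fun i => hg i.succ)
      (fun i => hf₁ i.succ) (fun i => hg₁ i.succ)
    rw [eLpNorm_pi_fin_succ, Fin.sum_univ_succ]
    simp only [Fin.prod_univ_succ, Fin.cons_zero, Fin.cons_succ]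
    have h_split := eLpNorm_prod_mul_sub_le (μ := μ 0) (ν := Measure.pi fun i => μ i.succ)
      (f₂ := fun y : Fin n → α => ∏ i, f i.succ (y i))
      (g₂ := fun y : Fin n → α => ∏ i, g i.succ (y i))
      (hf 0).aestronglyMeasurable (hg 0).aestronglyMeasurable
      (measurable_fin_prod_apply fun i => hf i.succ).aestronglyMeasurable
      (measurable_fin_prod_apply fun i => hg i.succ).aestronglyMeasurable hp₁ hp
    refine h_split.trans ?_
    calc _ ≤ eLpNorm (g 0 - f 0) p (μ 0) * 1 +
          1 * ∑ i : Fin n, eLpNorm (g i.succ - f i.succ) p (μ i.succ) :=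
          add_le_add (mul_le_mul' le_rfl hg_tail) (mul_le_mul' (hf₁ 0) h_tail)
      _ = _ := by rw [mul_one, one_mul]

end FinProd

theorem measurable_haar1 (a l : ℝ) (e : Bool) : Measurable (haar1 a l e) := by
  have hstep (c d : ℝ) : Measurable fun t : ℝ => if c ≤ t ∧ t < d then (1 : ℝ) else 0 :=
    Measurable.ite measurableSet_Ico measurable_const measurable_const
  cases e
  · exact measurable_const.mul (hstep _ _)
  · exact measurable_const.mul ((hstep _ _).sub (hstep _ _))

theorem norm_haar1_le (a l : ℝ) (e : Bool) (t : ℝ) : ‖haar1 a l e t‖ ≤ (√l)⁻¹ := by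
  have h0 : (0 : ℝ) ≤ (√l)⁻¹ := by positivity
  unfold haar1
  cases e <;> simp only [Bool.false_eq_true, if_false, if_true] <;>
    rw [Real.norm_eq_abs, abs_mul, abs_of_nonneg h0] <;>
    split_ifs <;> simp

theorem haar1_eq_zero_of_notMem {a l t : ℝ} (e : Bool) (ht : t ∉ Ico a (a + l)) :
    haar1 a l e t = 0 := by
  rw [mem_Ico, not_and_or, not_le, not_lt] at ht
  have h₁ : ¬(a ≤ t ∧ t < a + l / 2) := by rintro ⟨_, _⟩; rcases ht with _ | _ <;> linarith
  have h₂ : ¬(a + l / 2 ≤ t ∧ t < a + l) := by rintro ⟨_, _⟩; rcases ht with _ | _ <;> linarith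
  have h₃ : ¬(a ≤ t ∧ t < a + l) := by rintro ⟨_, _⟩; rcases ht with _ | _ <;> linarith
  cases e <;> simp [haar1, h₁, h₂, h₃]

theorem eLpNorm_haar1_le_one (a : ℝ) {l : ℝ} (hl : 0 ≤ l) (e : Bool) :
    eLpNorm (haar1 a l e) 2 volume ≤ 1 := by
  have hsupp : Function.support (haar1 a l e) ⊆ Ico a (a + l) := fun t ht =>
    by_contra fun h => ht (haar1_eq_zero_of_notMem e h)
  refine (eLpNorm_le_of_norm_le_of_support_subset (norm_haar1_le a l e) hsupp).trans ?_
  rw [Real.volume_Ico, add_sub_cancel_left, ENNReal.toReal_ofNat, ← one_div,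
    ENNReal.ofReal_rpow_of_nonneg hl (by norm_num), ← Real.sqrt_eq_rpow,
    ← ENNReal.ofReal_mul (by positivity), ← ENNReal.ofReal_one]
  exact ENNReal.ofReal_le_ofReal mul_inv_le_one

theorem le_sub_iff_le_of_notMem_uIcc {p s t : ℝ} (h : t ∉ uIcc p (p + s)) :
    p ≤ t - s ↔ p ≤ t := by
  simp only [mem_uIcc, not_or, not_and, not_le] at h
  constructor
  · intro hp; linarith [h.2 (by linarith)]
  · intro hp; linarith [h.1 hp]

theorem haar1_sub_eq_of_notMem {a l s t : ℝ} (e : Bool)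
    (ht : t ∉ uIcc a (a + s) ∪ uIcc (a + l / 2) (a + l / 2 + s) ∪ uIcc (a + l) (a + l + s)) :
    haar1 a l e (t - s) = haar1 a l e t := by
  simp only [mem_union, not_or] at ht
  obtain ⟨⟨h₀, h₁⟩, h₂⟩ := ht
  have sub_lt_iff {p : ℝ} (h : t ∉ uIcc p (p + s)) : t - s < p ↔ t < p := by
    simpa only [not_le] using (le_sub_iff_le_of_notMem_uIcc h).not
  simp only [haar1, le_sub_iff_le_of_notMem_uIcc h₀, le_sub_iff_le_of_notMem_uIcc h₁,
    sub_lt_iff h₁, sub_lt_iff h₂]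

theorem eLpNorm_haar1_sub_le (a l s : ℝ) (e : Bool) :
    eLpNorm (fun t => haar1 a l e (t - s) - haar1 a l e t) 2 volume ≤
      ENNReal.ofReal (4 * √(|s| / l)) := by
  set S := uIcc a (a + s) ∪ uIcc (a + l / 2) (a + l / 2 + s) ∪ uIcc (a + l) (a + l + s)
  have hsupp : Function.support (fun t => haar1 a l e (t - s) - haar1 a l e t) ⊆ S :=
    fun t ht => by_contra fun h => ht (sub_eq_zero.2 (haar1_sub_eq_of_notMem e h))
  have hbound (t : ℝ) : ‖haar1 a l e (t - s) - haar1 a l e t‖ ≤ 2 * (√l)⁻¹ :=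
    (norm_sub_le _ _).trans (by linarith [norm_haar1_le a l e (t - s), norm_haar1_le a l e t])
  have hvol : volume S ≤ ENNReal.ofReal (3 * |s|) := by
    have h (p : ℝ) : volume (uIcc p (p + s)) = ENNReal.ofReal |s| := by
      rw [Real.volume_interval, add_sub_cancel_left]
    calc volume S ≤ volume (uIcc a (a + s)) + volume (uIcc (a + l / 2) (a + l / 2 + s)) +
          volume (uIcc (a + l) (a + l + s)) :=
          (measure_union_le _ _).trans (add_le_add_left (measure_union_le _ _) _)
      _ = ENNReal.ofReal (3 * |s|) := by
          rw [h, h, h, ENNReal.ofReal_mul (by norm_num), ENNReal.ofReal_ofNat]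
          ring
  have hsqrt3 : √3 ≤ 2 := Real.sqrt_le_iff.2 ⟨by norm_num, by norm_num⟩
  calc _ ≤ volume S ^ (2 : ℝ≥0∞).toReal⁻¹ * ENNReal.ofReal (2 * (√l)⁻¹) :=
        eLpNorm_le_of_norm_le_of_support_subset hbound hsupp
    _ ≤ ENNReal.ofReal (3 * |s|) ^ (2 : ℝ≥0∞).toReal⁻¹ * ENNReal.ofReal (2 * (√l)⁻¹) := by
        gcongr
    _ = ENNReal.ofReal (√(3 * |s|) * (2 * (√l)⁻¹)) := by
        rw [ENNReal.toReal_ofNat, ← one_div, ENNReal.ofReal_rpow_of_nonneg (by positivity)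
          (by norm_num), ← Real.sqrt_eq_rpow, ← ENNReal.ofReal_mul (by positivity)]
    _ ≤ ENNReal.ofReal (4 * √(|s| / l)) := by
        refine ENNReal.ofReal_le_ofReal ?_
        rw [Real.sqrt_mul (by norm_num), Real.sqrt_div (abs_nonneg s)]
        have : 0 ≤ √|s| / √l := by positivity
        calc √3 * √|s| * (2 * (√l)⁻¹) = 2 * √3 * (√|s| / √l) := by ring
          _ ≤ 4 * (√|s| / √l) := by nlinarith

section HaarCube

variable {n : ℕ} (I : Cube n) (η : Fin n → Bool)

theorem measurable_haarCube : Measurable (haarCube I η) :=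
  measurable_fin_prod_apply fun _ => measurable_haar1 _ _ _

theorem eLpNorm_haarCube_le_one : eLpNorm (haarCube I η) 2 volume ≤ 1 :=
  (eLpNorm_fin_prod_eq_prod (fun _ => volume) (fun i => measurable_haar1 _ _ _) (by norm_num)
    (by norm_num)).trans_le
    (Finset.prod_le_one' fun i _ => eLpNorm_haar1_le_one _ I.len_pos.le _)

theorem eLpNorm_haarCube_sub_le (w : Rn n) :
    eLpNorm (fun x => haarCube I η (x - w) - haarCube I η x) 2 volume ≤
      ENNReal.ofReal (4 * n * √(‖w‖ / I.len)) := by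
  have htranslate (i : Fin n) :
      eLpNorm (fun t => haar1 (I.corner i) I.len (η i) (t - w i)) 2 volume ≤ 1 := by
    rw [eLpNorm_comp_sub_right (measurable_haar1 _ _ _).aestronglyMeasurable]
    exact eLpNorm_haar1_le_one _ I.len_pos.le _
  refine (eLpNorm_fin_prod_sub_le (fun _ => volume)
    (g := fun i t => haar1 (I.corner i) I.len (η i) (t - w i))
    (fun i => measurable_haar1 _ _ _)
    (fun i => (measurable_haar1 _ _ _).comp (measurable_id.sub_const _))
    (fun i => eLpNorm_haar1_le_one _ I.len_pos.le _) htranslate (by norm_num)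
    (by norm_num)).trans ?_
  calc _ ≤ ∑ _i : Fin n, ENNReal.ofReal (4 * √(‖w‖ / I.len)) := by
        refine Finset.sum_le_sum fun i _ => (eLpNorm_haar1_sub_le _ _ _ _).trans ?_
        gcongr
        · exact I.len_pos.le
        · exact (Real.norm_eq_abs (w i)).symm.trans_le (norm_le_pi_norm w i)
    _ = ENNReal.ofReal (4 * n * √(‖w‖ / I.len)) := by
        rw [Finset.sum_const, Finset.card_univ, Fintype.card_fin, nsmul_eq_mul,
          ← ENNReal.ofReal_natCast, ← ENNReal.ofReal_mul (by positivity), mul_left_comm,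
          mul_assoc]

end HaarCube

theorem sqrt_div_eq_rpow_mul_rpow {x l : ℝ} (hx : 0 ≤ x) (hl : 0 ≤ l) :
    √(x / l) = x ^ ((1 : ℝ) / 2) * l ^ (-(1 : ℝ) / 2) := by
  rw [Real.sqrt_div hx, Real.sqrt_eq_rpow, Real.sqrt_eq_rpow, neg_div, Real.rpow_neg hl,
    div_eq_mul_inv]

theorem haar_translation_L2_general
    (n₁ n₂ : ℕ) :
    ∃ C : ℝ, 0 < C ∧
      ∀ (I₁ : Cube n₁) (I₂ : Cube n₂) (η₁ : Fin n₁ → Bool) (η₂ : Fin n₂ → Bool)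
        (v : Rnn n₁ n₂),
        eLpNorm
          (fun x : Rnn n₁ n₂ =>
            haarCube I₁ η₁ (x.1 - v.1) * haarCube I₂ η₂ (x.2 - v.2) -
              haarCube I₁ η₁ x.1 * haarCube I₂ η₂ x.2) 2 volume ≤
        ENNReal.ofReal
          (C * (‖v.1‖ ^ ((1 : ℝ) / 2) * I₁.len ^ (-(1 : ℝ) / 2) +
            ‖v.2‖ ^ ((1 : ℝ) / 2) * I₂.len ^ (-(1 : ℝ) / 2))) := by
  refine ⟨4 * (n₁ + n₂ + 1), by positivity, fun I₁ I₂ η₁ η₂ v => ?_⟩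
  rw [Measure.volume_eq_prod]
  refine (eLpNorm_prod_mul_sub_le (μ := volume) (ν := volume)
    (measurable_haarCube I₁ η₁).aestronglyMeasurable
    ((measurable_haarCube I₁ η₁).comp (measurable_id.sub_const v.1)).aestronglyMeasurable
    (measurable_haarCube I₂ η₂).aestronglyMeasurable
    ((measurable_haarCube I₂ η₂).comp (measurable_id.sub_const v.2)).aestronglyMeasurable
    one_le_two (by norm_num)).trans ?_
  rw [← sqrt_div_eq_rpow_mul_rpow (norm_nonneg _) I₁.len_pos.le,
    ← sqrt_div_eq_rpow_mul_rpow (norm_nonneg _) I₂.len_pos.le]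
  calc _ ≤ ENNReal.ofReal (4 * n₁ * √(‖v.1‖ / I₁.len)) * 1 +
        1 * ENNReal.ofReal (4 * n₂ * √(‖v.2‖ / I₂.len)) := by
        gcongr
        · exact eLpNorm_haarCube_sub_le I₁ η₁ v.1
        · exact (eLpNorm_comp_sub_right (measurable_haarCube I₂ η₂).aestronglyMeasurable
            _ _).trans_le (eLpNorm_haarCube_le_one I₂ η₂)
        · exact eLpNorm_haarCube_le_one I₁ η₁
        · exact eLpNorm_haarCube_sub_le I₂ η₂ v.2
    _ ≤ _ := by
        rw [mul_one, one_mul, ← ENNReal.ofReal_add (by positivity) (by positivity)]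
        refine ENNReal.ofReal_le_ofReal ?_
        nlinarith [Real.sqrt_nonneg (‖v.1‖ / I₁.len), Real.sqrt_nonneg (‖v.2‖ / I₂.len)]

/-- the `L²` modulus of continuity of tensor Haar functions:
`‖τ_v (h_{I¹}^{η¹} ⊗ h_{I²}^{η²}) - h_{I¹}^{η¹} ⊗ h_{I²}^{η²}‖_{L²}
  ≤ C (|v₁|^{1/2} ℓ(I¹)^{-1/2} + |v₂|^{1/2} ℓ(I²)^{-1/2})`. -/
theorem haar_translation_L2
    (n₁ n₂ : ℕ) (hn₁ : 1 ≤ n₁) (hn₂ : 1 ≤ n₂) :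
    ∃ C : ℝ, 0 < C ∧
      ∀ (I₁ : Cube n₁) (I₂ : Cube n₂) (η₁ : Fin n₁ → Bool) (η₂ : Fin n₂ → Bool)
        (v : Rnn n₁ n₂),
        eLpNorm
          (fun x : Rnn n₁ n₂ =>
            haarCube I₁ η₁ (x.1 - v.1) * haarCube I₂ η₂ (x.2 - v.2) -
              haarCube I₁ η₁ x.1 * haarCube I₂ η₂ x.2) 2 volume ≤
        ENNReal.ofReal
          (C * (‖v.1‖ ^ ((1 : ℝ) / 2) * I₁.len ^ (-(1 : ℝ) / 2) +
            ‖v.2‖ ^ ((1 : ℝ) / 2) * I₂.len ^ (-(1 : ℝ) / 2))) :=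
  haar_translation_L2_general n₁ n₂
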